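/- arXiv:2208.03811 — 5 statements merged into one kernel-verified Lean document; each statement's English description precedes it below -/
import Mathlib

section
/- Let f be a ν-self-concordant barrier on a convex set Q. Then for all x, y in the domain of f, ⟨∇f(x), y − x⟩ ≤ ν. -/
open Set

/-- `f` is self-concordant on the interior of `Q`:
`|D³f(x)[h,h,h]| ≤ 2 (D²f(x)[h,h])^{3/2}`. -/
def SelfConcordantOn {n : ℕ} (Q : Set (EuclideanSpace ℝ (Fin n)))
    (f : EuclideanSpace ℝ (Fin n) → ℝ) : Prop :=
  ContDiffOn ℝ 3 f (interior Q) ∧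
  ∀ x ∈ interior Q, ∀ h : EuclideanSpace ℝ (Fin n),
    |iteratedFDeriv ℝ 3 f x ![h, h, h]| ≤
      2 * (iteratedFDeriv ℝ 2 f x ![h, h]) ^ ((3 : ℝ) / 2)

/-- `f` is a `ν`-self-concordant barrier on `Q`: it is self-concordant and the barrier
condition `∇f(x)ᵀ (∇²f(x))⁻¹ ∇f(x) ≤ ν` holds, expressed in the equivalent form
`(Df(x)[h])² ≤ ν · D²f(x)[h,h]` for all directions `h`. -/
def IsSelfConcordantBarrier {n : ℕ} (ν : ℝ) (Q : Set (EuclideanSpace ℝ (Fin n)))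
    (f : EuclideanSpace ℝ (Fin n) → ℝ) : Prop :=
  SelfConcordantOn Q f ∧
  ∀ x ∈ interior Q, ∀ h : EuclideanSpace ℝ (Fin n),
    (iteratedFDeriv ℝ 1 f x ![h]) ^ 2 ≤ ν * iteratedFDeriv ℝ 2 f x ![h, h]

/-- For a `ν`-self-concordant barrier `f` on a convex set `Q` and any `x, y` in the domain,
`⟨∇f(x), y − x⟩ ≤ ν`. -/
theorem selfConcordantBarrier_grad_le {n : ℕ} (ν : ℝ) (hν : 0 < ν)
    (Q : Set (EuclideanSpace ℝ (Fin n))) (hQ : Convex ℝ Q)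
    (f : EuclideanSpace ℝ (Fin n) → ℝ) (hf : IsSelfConcordantBarrier ν Q f)
    (x y : EuclideanSpace ℝ (Fin n)) (hx : x ∈ interior Q) (hy : y ∈ interior Q) :
    (inner ℝ (gradient f x) (y - x) : ℝ) ≤ ν := by
  obtain ⟨⟨hf1, _⟩, hf2⟩ := hf
  have hU : IsOpen (interior Q) := isOpen_interior
  have hconv : Convex ℝ (interior Q) := hQ.interior
  set h : EuclideanSpace ℝ (Fin n) := y - x with hh
  set γ : ℝ → EuclideanSpace ℝ (Fin n) := fun t => x + t • h with hγ
  have hγmem : ∀ t ∈ Icc (0:ℝ) 1, γ t ∈ interior Q := by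
    intro t ht
    have := hconv hx hy (by linarith [ht.2] : (0:ℝ) ≤ 1 - t) ht.1 (by ring)
    convert this using 1
    simp only [hγ, hh]
    module
  set φ : ℝ → ℝ := fun t => fderiv ℝ f (γ t) h with hφ
  set ψ : ℝ → ℝ := fun t => fderiv ℝ (fderiv ℝ f) (γ t) h h with hψ
  have hγd : ∀ t : ℝ, HasDerivAt γ h t := by
    intro t
    have : HasDerivAt (fun t : ℝ => t • h) ((1:ℝ) • h) t :=
      (hasDerivAt_id t).smul_const h
    rw [one_smul] at this
    exact this.const_add x
  have hfd : ∀ z ∈ interior Q, HasFDerivAt (fderiv ℝ f) (fderiv ℝ (fderiv ℝ f) z) z := by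
    intro z hz
    have h3 : ContDiffAt ℝ 3 f z := (hf1 z hz).contDiffAt (hU.mem_nhds hz)
    have h2 : ContDiffAt ℝ 2 (fderiv ℝ f) z := h3.fderiv_right (by norm_num)
    exact (h2.differentiableAt (by norm_num)).hasFDerivAt
  have hφd : ∀ t ∈ Icc (0:ℝ) 1, HasDerivAt φ (ψ t) t := by
    intro t ht
    have hz := hγmem t ht
    have h1 : HasDerivAt (fun s => fderiv ℝ f (γ s)) (fderiv ℝ (fderiv ℝ f) (γ t) h) t :=
      (hfd (γ t) hz).comp_hasDerivAt t (hγd t)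
    have := h1.clm_apply (hasDerivAt_const t h)
    simpa using this
  have hbar : ∀ t ∈ Icc (0:ℝ) 1, φ t ^ 2 ≤ ν * ψ t := by
    intro t ht
    have := hf2 (γ t) (hγmem t ht) h
    rw [iteratedFDeriv_one_apply, iteratedFDeriv_two_apply] at this
    simpa using this
  have hψ0 : ∀ t ∈ Icc (0:ℝ) 1, 0 ≤ ψ t := by
    intro t ht
    nlinarith [hbar t ht, sq_nonneg (φ t)]
  have hφcont : ContinuousOn φ (Icc (0:ℝ) 1) :=
    fun t ht => ((hφd t ht).continuousAt).continuousWithinAt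
  have hφmono : MonotoneOn φ (Icc (0:ℝ) 1) := by
    apply monotoneOn_of_deriv_nonneg (convex_Icc 0 1) hφcont
    · intro t ht
      rw [interior_Icc] at ht
      exact ((hφd t (Ioo_subset_Icc_self ht)).differentiableAt).differentiableWithinAt
    · intro t ht
      rw [interior_Icc] at ht
      rw [(hφd t (Ioo_subset_Icc_self ht)).deriv]
      exact hψ0 t (Ioo_subset_Icc_self ht)
  have hgoal : (inner ℝ (gradient f x) (y - x) : ℝ) = φ 0 := by
    rw [gradient, InnerProductSpace.toDual_symm_apply]
    simp [hφ, hγ, hh]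
  rw [hgoal]
  by_contra hc
  push_neg at hc
  -- φ 0 > ν > 0, φ monotone, so φ t ≥ φ 0 > 0 on [0,1]
  have hφpos : ∀ t ∈ Icc (0:ℝ) 1, 0 < φ t := by
    intro t ht
    have := hφmono (left_mem_Icc.2 (by norm_num)) ht ht.1
    linarith
  -- u t = ν / φ t + t is antitone on [0,1]
  set u : ℝ → ℝ := fun t => ν / φ t + t with hu
  have hud : ∀ t ∈ Icc (0:ℝ) 1, HasDerivAt u (-(ν * ψ t) / φ t ^ 2 + 1) t := by
    intro t ht
    have h1 : HasDerivAt (fun s => ν / φ s) ((0 * φ t - ν * ψ t) / φ t ^ 2) t :=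
      (hasDerivAt_const t ν).div (hφd t ht) (ne_of_gt (hφpos t ht))
    have h2 := h1.add (hasDerivAt_id t)
    convert h2 using 1
    · rfl
    · rfl
    · rfl
    · ring
  have huanti : AntitoneOn u (Icc (0:ℝ) 1) := by
    apply antitoneOn_of_deriv_nonpos (convex_Icc 0 1)
    · exact fun t ht => ((hud t ht).continuousAt).continuousWithinAt
    · intro t ht
      rw [interior_Icc] at ht
      exact ((hud t (Ioo_subset_Icc_self ht)).differentiableAt).differentiableWithinAt
    · intro t ht
      rw [interior_Icc] at ht
      have ht' := Ioo_subset_Icc_self ht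
      rw [(hud t ht').deriv]
      have hb := hbar t ht'
      have hp := hφpos t ht'
      rw [div_add' _ _ _ (by positivity)]
      apply div_nonpos_of_nonpos_of_nonneg _ (by positivity)
      nlinarith
  have h01 : u 1 ≤ u 0 :=
    huanti (left_mem_Icc.2 (by norm_num)) (right_mem_Icc.2 (by norm_num)) (by norm_num)
  have hφ1 : 0 < φ 1 := hφpos 1 (right_mem_Icc.2 (by norm_num))
  have hφ0 : ν < φ 0 := hc
  have e1 : 0 < ν / φ 1 := by positivity
  have e0 : ν / φ 0 < 1 := (div_lt_one (by linarith)).2 hφ0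
  simp only [hu] at h01
  linarith
end

section
/- Let f be a ν-self-concordant barrier on a convex set, and suppose x, y in the domain satisfy ⟨∇f(x), y − x⟩ ≥ 0. Then ‖y − x‖_x ≤ 4ν + 1, where ‖v‖_x = √(⟨v, ∇²f(x)v⟩). -/
open Set

lemma keyODE (ν : ℝ) (hν : 0 < ν) (u ψ χ : ℝ → ℝ)
    (hu : ∀ t ∈ Icc (0:ℝ) 1, HasDerivAt u (ψ t) t)
    (hψd : ∀ t ∈ Icc (0:ℝ) 1, HasDerivAt ψ (χ t) t)
    (hψ0 : ∀ t ∈ Icc (0:ℝ) 1, 0 ≤ ψ t)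
    (hbar : ∀ t ∈ Icc (0:ℝ) 1, u t ^ 2 ≤ ν * ψ t)
    (hsc : ∀ t ∈ Icc (0:ℝ) 1, |χ t| ≤ 2 * Real.sqrt (ψ t) ^ 3)
    (hu0 : 0 ≤ u 0) :
    Real.sqrt (ψ 0) ≤ 2 * ν + 1 := by
  by_contra hcon
  push_neg at hcon
  set r : ℝ := Real.sqrt (ψ 0) with hr_def
  have hr1 : 1 < r := by linarith
  have hr0 : 0 < r := by linarith
  -- Step 1: ψ t ≥ (1/r + t)⁻² on [0,1], in multiplicative form
  have step1 : ∀ t ∈ Icc (0:ℝ) 1, 1 ≤ Real.sqrt (ψ t) * (1 / r + t) := by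
    have hψcont : ContinuousOn ψ (Icc (0:ℝ) 1) := fun t ht =>
      (hψd t ht).continuousAt.continuousWithinAt
    set S : Set ℝ := {t | 1 ≤ Real.sqrt (ψ t) * (1 / r + t)} with hS_def
    have hclosed : IsClosed (S ∩ Icc (0:ℝ) 1) := by
      rw [inter_comm]
      have hcont : ContinuousOn (fun t => Real.sqrt (ψ t) * (1 / r + t)) (Icc (0:ℝ) 1) :=
        (hψcont.sqrt).mul (continuousOn_const.add continuousOn_id)
      exact hcont.preimage_isClosed_of_isClosed isClosed_Icc (isClosed_Ici (a := (1:ℝ)))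
    have h0S : (0:ℝ) ∈ S := by
      simp only [hS_def, mem_setOf_eq, add_zero, ← hr_def]
      rw [mul_one_div, div_self (ne_of_gt hr0)]
    have hstep : ∀ t ∈ S ∩ Ico (0:ℝ) 1, ∀ b ∈ Ioi t, (S ∩ Ioc t b).Nonempty := by
      rintro t ⟨htS, ht0, ht1⟩ b hb
      have htIcc : t ∈ Icc (0:ℝ) 1 := ⟨ht0, le_of_lt ht1⟩
      have htS' : 1 ≤ Real.sqrt (ψ t) * (1 / r + t) := htS
      have hψtpos : 0 < ψ t := by
        rcases lt_or_ge 0 (ψ t) with h | h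
        · exact h
        · exfalso
          have h0 : Real.sqrt (ψ t) = 0 := Real.sqrt_eq_zero'.mpr h
          rw [h0, zero_mul] at htS'
          linarith
      have hev : ∀ᶠ s in nhds t, ψ s ∈ Ioi (0:ℝ) :=
        (hψd t htIcc).continuousAt.eventually_mem (isOpen_Ioi.mem_nhds hψtpos)
      rw [Metric.eventually_nhds_iff] at hev
      obtain ⟨ε, hε, hball⟩ := hev
      set d : ℝ := min b (min 1 (t + ε / 2)) with hd_def
      have htd : t < d := lt_min hb (lt_min ht1 (by linarith))
      have hd1 : d ≤ 1 := le_trans (min_le_right _ _) (min_le_left _ _)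
      have hdb : d ≤ b := min_le_left _ _
      have hdε : d ≤ t + ε / 2 := le_trans (min_le_right _ _) (min_le_right _ _)
      have hpos : ∀ s ∈ Icc t d, 0 < ψ s := by
        intro s hs
        apply hball
        rw [Real.dist_eq, abs_of_nonneg (by linarith [hs.1])]
        linarith [hs.2]
      have hIccIcc : Icc t d ⊆ Icc (0:ℝ) 1 := fun s hs => ⟨le_trans ht0 hs.1, le_trans hs.2 hd1⟩
      set H : ℝ → ℝ := fun s => (Real.sqrt (ψ s))⁻¹ - s with hH_def
      have hHderiv : ∀ s ∈ Icc t d, HasDerivAt H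
          (-(χ s / (2 * Real.sqrt (ψ s))) / (Real.sqrt (ψ s)) ^ 2 - 1) s := by
        intro s hs
        have h1 : HasDerivAt (fun s => Real.sqrt (ψ s)) (χ s / (2 * Real.sqrt (ψ s))) s :=
          (hψd s (hIccIcc hs)).sqrt (ne_of_gt (hpos s hs))
        have h2 := h1.inv (ne_of_gt (Real.sqrt_pos.mpr (hpos s hs)))
        exact h2.sub (hasDerivAt_id s)
      have hHanti : AntitoneOn H (Icc t d) := by
        apply antitoneOn_of_deriv_nonpos (convex_Icc t d)
        · exact fun s hs => (hHderiv s hs).continuousAt.continuousWithinAt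
        · intro s hs
          rw [interior_Icc] at hs
          exact (hHderiv s (Ioo_subset_Icc_self hs)).differentiableAt.differentiableWithinAt
        · intro s hs
          rw [interior_Icc] at hs
          have hs' : s ∈ Icc t d := Ioo_subset_Icc_self hs
          rw [(hHderiv s hs').deriv]
          have hsq : 0 < Real.sqrt (ψ s) := Real.sqrt_pos.mpr (hpos s hs')
          have hχ : -χ s ≤ 2 * Real.sqrt (ψ s) ^ 3 :=
            le_trans (neg_le_abs _) (hsc s (hIccIcc hs'))
          have heq : -(χ s / (2 * Real.sqrt (ψ s))) / (Real.sqrt (ψ s)) ^ 2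
              = -χ s / (2 * Real.sqrt (ψ s) ^ 3) := by
            rw [← neg_div, div_div]
            congr 1
            ring
          rw [heq]
          have : -χ s / (2 * Real.sqrt (ψ s) ^ 3) ≤ 1 := by
            rw [div_le_one (by positivity)]
            linarith
          linarith
      have hHdt : H d ≤ H t :=
        hHanti ⟨le_refl t, le_of_lt htd⟩ ⟨le_of_lt htd, le_refl d⟩ (le_of_lt htd)
      have hat : 0 < Real.sqrt (ψ t) := Real.sqrt_pos.mpr hψtpos
      have had : 0 < Real.sqrt (ψ d) := Real.sqrt_pos.mpr (hpos d ⟨le_of_lt htd, le_refl d⟩)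
      have h5 : (Real.sqrt (ψ t))⁻¹ ≤ 1 / r + t := by
        rw [inv_eq_one_div, div_le_iff₀ hat]
        linarith [mul_comm (Real.sqrt (ψ t)) (1 / r + t)]
      have h6 : (Real.sqrt (ψ d))⁻¹ ≤ 1 / r + d := by
        have : (Real.sqrt (ψ d))⁻¹ - d ≤ (Real.sqrt (ψ t))⁻¹ - t := hHdt
        linarith
      have hdS : d ∈ S := by
        have := mul_le_mul_of_nonneg_left h6 (le_of_lt had)
        rw [mul_inv_cancel₀ (ne_of_gt had)] at this
        exact this
      exact ⟨d, hdS, ⟨htd, hdb⟩⟩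
    exact fun t ht => IsClosed.Icc_subset_of_forall_exists_gt hclosed h0S hstep ht
  -- derived quantitative bound: ψ t * (1/r + t)^2 ≥ 1
  have step1' : ∀ t ∈ Icc (0:ℝ) 1, 1 ≤ ψ t * (1 / r + t) ^ 2 := by
    intro t ht
    have h := step1 t ht
    have h2 := mul_le_mul h h (by norm_num) (by positivity)
    rw [one_mul] at h2
    calc (1:ℝ) = 1 * 1 := by ring
    _ ≤ _ := by nlinarith [Real.sq_sqrt (hψ0 t ht), Real.sqrt_nonneg (ψ t)]
  -- Step 2: u (1/r) ≥ r / 2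
  set t0 : ℝ := 1 / r with ht0_def
  have ht0mem : t0 ∈ Icc (0:ℝ) 1 := ⟨by positivity, by
    rw [ht0_def, div_le_one hr0]; linarith⟩
  set w : ℝ → ℝ := fun s => u s + (1 / r + s)⁻¹ with hw_def
  have hwderiv : ∀ s ∈ Icc (0:ℝ) 1, HasDerivAt w (ψ s + -1 / (1 / r + s) ^ 2) s := by
    intro s hs
    have hrs : (0:ℝ) < 1 / r + s := by have := hs.1; positivity
    have h1 : HasDerivAt (fun s : ℝ => (1 / r + s)⁻¹) (-1 / (1 / r + s) ^ 2) s := by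
      have := ((hasDerivAt_id s).const_add (1 / r)).inv (ne_of_gt hrs)
      exact this
    exact (hu s hs).add h1
  have hwmono : MonotoneOn w (Icc (0:ℝ) 1) := by
    apply monotoneOn_of_deriv_nonneg (convex_Icc 0 1)
    · exact fun s hs => (hwderiv s hs).continuousAt.continuousWithinAt
    · intro s hs
      rw [interior_Icc] at hs
      exact (hwderiv s (Ioo_subset_Icc_self hs)).differentiableAt.differentiableWithinAt
    · intro s hs
      rw [interior_Icc] at hs
      have hs' : s ∈ Icc (0:ℝ) 1 := Ioo_subset_Icc_self hs
      rw [(hwderiv s hs').deriv]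
      have hrs : (0:ℝ) < 1 / r + s := by have := hs'.1; positivity
      have := step1' s hs'
      have h2 : 1 / (1 / r + s) ^ 2 ≤ ψ s := by
        rw [div_le_iff₀ (by positivity)]
        linarith
      have h3 : -1 / (1 / r + s) ^ 2 = -(1 / (1 / r + s) ^ 2) := by ring
      rw [h3]
      linarith
  have hw0 : w 0 = u 0 + r := by
    rw [hw_def]
    simp only [add_zero, one_div, inv_inv]
  have hinv : (1 / r + t0)⁻¹ = r / 2 := by
    rw [ht0_def, ← add_div, inv_div]
    norm_num
  have hut0 : r / 2 ≤ u t0 := by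
    have h := hwmono (left_mem_Icc.mpr (by norm_num)) ht0mem ht0mem.1
    rw [hw0] at h
    have hw1 : u 0 + r ≤ u t0 + r / 2 := by rw [← hinv]; exact h
    linarith
  -- Step 3: blow-up / contradiction on [t0, 1]
  have humono : MonotoneOn u (Icc (0:ℝ) 1) := by
    apply monotoneOn_of_deriv_nonneg (convex_Icc 0 1)
    · exact fun s hs => (hu s hs).continuousAt.continuousWithinAt
    · intro s hs
      rw [interior_Icc] at hs
      exact (hu s (Ioo_subset_Icc_self hs)).differentiableAt.differentiableWithinAt
    · intro s hs
      rw [interior_Icc] at hs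
      have hs' : s ∈ Icc (0:ℝ) 1 := Ioo_subset_Icc_self hs
      rw [(hu s hs').deriv]
      exact hψ0 s hs'
  have hIcc_sub : Icc t0 1 ⊆ Icc (0:ℝ) 1 := fun s hs => ⟨le_trans ht0mem.1 hs.1, hs.2⟩
  have hupos : ∀ s ∈ Icc t0 1, r / 2 ≤ u s := fun s hs =>
    le_trans hut0 (humono ht0mem (hIcc_sub hs) hs.1)
  set z : ℝ → ℝ := fun s => s + ν * (u s)⁻¹ with hz_def
  have hzderiv : ∀ s ∈ Icc t0 1, HasDerivAt z (1 + ν * (-(ψ s) / u s ^ 2)) s := by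
    intro s hs
    have hus : (0:ℝ) < u s := lt_of_lt_of_le (by linarith) (hupos s hs)
    have h1 := ((hu s (hIcc_sub hs)).inv (ne_of_gt hus)).const_mul ν
    exact (hasDerivAt_id s).add h1
  have hzanti : AntitoneOn z (Icc t0 1) := by
    apply antitoneOn_of_deriv_nonpos (convex_Icc t0 1)
    · exact fun s hs => (hzderiv s hs).continuousAt.continuousWithinAt
    · intro s hs
      rw [interior_Icc] at hs
      exact (hzderiv s (Ioo_subset_Icc_self hs)).differentiableAt.differentiableWithinAt
    · intro s hs
      rw [interior_Icc] at hs
      have hs' : s ∈ Icc t0 1 := Ioo_subset_Icc_self hs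
      rw [(hzderiv s hs').deriv]
      have hus : (0:ℝ) < u s := lt_of_lt_of_le (by linarith) (hupos s hs')
      have hb := hbar s (hIcc_sub hs')
      have h1 : 1 ≤ ν * ψ s / u s ^ 2 := by
        rw [le_div_iff₀ (by positivity)]
        linarith
      have h2 : ν * (-(ψ s) / u s ^ 2) = -(ν * ψ s / u s ^ 2) := by ring
      rw [h2]
      linarith
  have ht0le1 : t0 ≤ 1 := ht0mem.2
  have h1mem : (1:ℝ) ∈ Icc t0 1 := ⟨ht0le1, le_refl 1⟩
  have ht0mem' : t0 ∈ Icc t0 1 := ⟨le_refl t0, ht0le1⟩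
  have hz1 : z 1 ≤ z t0 := hzanti ht0mem' h1mem ht0le1
  have hu1 : r / 2 ≤ u 1 := hupos 1 h1mem
  have hu1pos : 0 < u 1 := lt_of_lt_of_le (by linarith) hu1
  have hut0pos : 0 < u t0 := lt_of_lt_of_le (by linarith) hut0
  -- z t0 ≤ (1 + 2ν)/r < 1 but z 1 > 1
  have hinv2 : (u t0)⁻¹ ≤ (r / 2)⁻¹ := by
    apply inv_anti₀ (by linarith) hut0
  have hzt0 : z t0 ≤ 1 / r + ν * (2 / r) := by
    have : ν * (u t0)⁻¹ ≤ ν * (r / 2)⁻¹ := by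
      apply mul_le_mul_of_nonneg_left hinv2 (le_of_lt hν)
    have hrr : (r / 2)⁻¹ = 2 / r := by rw [inv_div]
    rw [hz_def]
    simp only [ht0_def]
    rw [hrr] at this
    linarith
  have hlt1 : 1 / r + ν * (2 / r) < 1 := by
    have heq : 1 / r + ν * (2 / r) = (1 + 2 * ν) / r := by ring
    rw [heq, div_lt_one hr0]
    linarith
  have hz1gt : 1 < z 1 := by
    rw [hz_def]
    simp only
    have : 0 < ν * (u 1)⁻¹ := by positivity
    linarith
  exact absurd (lt_of_lt_of_le hz1gt (le_trans hz1 hzt0)) (not_lt.mpr (le_of_lt hlt1))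

lemma rpow_three_halves {a : ℝ} (ha : 0 ≤ a) : a ^ ((3:ℝ)/2) = Real.sqrt a ^ 3 := by
  rw [Real.sqrt_eq_rpow, ← Real.rpow_natCast (a ^ (1/(2:ℝ))) 3, ← Real.rpow_mul ha]
  norm_num

set_option maxHeartbeats 1600000 in
/-- If `f` is a `ν`-self-concordant barrier and `⟨∇f(x), y − x⟩ ≥ 0` for `x, y` in the domain,
then `‖y − x‖_x ≤ 4ν + 1`, where `‖v‖_x = √(⟨v, ∇²f(x) v⟩)`. -/
theorem selfConcordantBarrier_localNorm_le {n : ℕ} (ν : ℝ) (hν : 0 < ν)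
    (Q : Set (EuclideanSpace ℝ (Fin n))) (hQ : Convex ℝ Q)
    (f : EuclideanSpace ℝ (Fin n) → ℝ) (hf : IsSelfConcordantBarrier ν Q f)
    (x y : EuclideanSpace ℝ (Fin n)) (hx : x ∈ interior Q) (hy : y ∈ interior Q)
    (hgrad : 0 ≤ (inner ℝ (gradient f x) (y - x) : ℝ)) :
    Real.sqrt (iteratedFDeriv ℝ 2 f x ![y - x, y - x]) ≤ 4 * ν + 1 := by
  obtain ⟨⟨hfC, hself⟩, hbarr⟩ := hf
  have hUopen : IsOpen (interior Q) := isOpen_interior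
  have hUconv : Convex ℝ (interior Q) := hQ.interior
  set v : EuclideanSpace ℝ (Fin n) := y - x with hv_def
  set F1 : EuclideanSpace ℝ (Fin n) → (EuclideanSpace ℝ (Fin n) →L[ℝ] ℝ) := fderiv ℝ f with hF1_def
  set F2 := fderiv ℝ F1 with hF2_def
  set F3 := fderiv ℝ F2 with hF3_def
  have hF1C : ContDiffOn ℝ 2 F1 (interior Q) := hfC.fderiv_of_isOpen (m := 2) hUopen (by norm_num)
  have hF2C : ContDiffOn ℝ 1 F2 (interior Q) := hF1C.fderiv_of_isOpen (m := 1) hUopen (by norm_num)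
  have hdF1 : ∀ z ∈ interior Q, HasFDerivAt F1 (F2 z) z := fun z hz =>
    (((hF1C.differentiableOn (by norm_num)) z hz).differentiableAt
      (hUopen.mem_nhds hz)).hasFDerivAt
  have hdF2 : ∀ z ∈ interior Q, HasFDerivAt F2 (F3 z) z := fun z hz =>
    (((hF2C.differentiableOn (by norm_num)) z hz).differentiableAt
      (hUopen.mem_nhds hz)).hasFDerivAt
  set γ : ℝ → EuclideanSpace ℝ (Fin n) := fun t => x + t • v with hγ_def
  have hγd : ∀ t : ℝ, HasDerivAt γ v t := by
    intro t
    have h := ((hasDerivAt_id t).smul_const v).const_add x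
    rw [one_smul] at h
    exact h
  have hmem : ∀ t ∈ Icc (0:ℝ) 1, γ t ∈ interior Q := by
    intro t ht
    have h := hUconv hx hy (by linarith [ht.2] : (0:ℝ) ≤ 1 - t) ht.1 (by ring)
    have he : (1 - t) • x + t • y = γ t := by
      rw [hγ_def]
      simp only [hv_def]
      module
    rwa [he] at h
  set u : ℝ → ℝ := fun t => F1 (γ t) v with hu_def
  set ψ : ℝ → ℝ := fun t => F2 (γ t) v v with hψ_def
  set χ : ℝ → ℝ := fun t => F3 (γ t) v v v with hχ_def
  have hu : ∀ t ∈ Icc (0:ℝ) 1, HasDerivAt u (ψ t) t := by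
    intro t ht
    have h1 := (hdF1 _ (hmem t ht)).comp_hasDerivAt t (hγd t)
    have h2 := (ContinuousLinearMap.apply ℝ ℝ v).hasFDerivAt.comp_hasDerivAt t h1
    exact h2
  have hψd : ∀ t ∈ Icc (0:ℝ) 1, HasDerivAt ψ (χ t) t := by
    intro t ht
    have h1 := HasFDerivAt.comp_hasDerivAt (l := F2) t (hdF2 _ (hmem t ht)) (hγd t)
    have h2 := (ContinuousLinearMap.apply ℝ (EuclideanSpace ℝ (Fin n) →L[ℝ] ℝ) v).hasFDerivAt.comp_hasDerivAt t h1
    have h3 := (ContinuousLinearMap.apply ℝ ℝ v).hasFDerivAt.comp_hasDerivAt t h2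
    exact h3
  -- translate the barrier and self-concordance hypotheses
  have e1 : ∀ z, iteratedFDeriv ℝ 1 f z ![v] = F1 z v := by
    intro z
    rw [iteratedFDeriv_one_apply]
    simp [hF1_def]
  have e2 : ∀ z, iteratedFDeriv ℝ 2 f z ![v, v] = F2 z v v := by
    intro z
    rw [iteratedFDeriv_two_apply]
    simp [hF2_def, hF1_def]
  have e3 : ∀ z, iteratedFDeriv ℝ 3 f z ![v, v, v] = F3 z v v v := by
    intro z
    rw [iteratedFDeriv_succ_apply_right, iteratedFDeriv_two_apply]
    simp [hF3_def, hF2_def, hF1_def, Fin.init, Fin.last]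
  have hbar' : ∀ t ∈ Icc (0:ℝ) 1, u t ^ 2 ≤ ν * ψ t := by
    intro t ht
    have h := hbarr (γ t) (hmem t ht) v
    rwa [e1, e2] at h
  have hψ0 : ∀ t ∈ Icc (0:ℝ) 1, 0 ≤ ψ t := by
    intro t ht
    have h := hbar' t ht
    nlinarith [sq_nonneg (u t)]
  have hsc' : ∀ t ∈ Icc (0:ℝ) 1, |χ t| ≤ 2 * Real.sqrt (ψ t) ^ 3 := by
    intro t ht
    have h := hself (γ t) (hmem t ht) v
    rw [e3, e2] at h
    rwa [rpow_three_halves (hψ0 t ht)] at h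
  have hγ0 : γ 0 = x := by simp [hγ_def]
  have hu0 : 0 ≤ u 0 := by
    have hg : (inner ℝ (gradient f x) v : ℝ) = F1 x v := by
      simp [gradient, hF1_def, InnerProductSpace.toDual_symm_apply]
    rw [hu_def]
    simp only [hγ0]
    rw [← hg]
    exact hgrad
  have hkey := keyODE ν hν u ψ χ hu hψd hψ0 hbar' hsc' hu0
  have hfin : iteratedFDeriv ℝ 2 f x ![y - x, y - x] = ψ 0 := by
    rw [hψ_def]
    simp only [hγ0]
    exact e2 x
  rw [hfin]
  linarith
end

section
/- If f is a self-concordant function, x is in the domain of f, and y satisfies ‖y − x‖_x < 1, then f(y) ≤ f(x) + ⟨∇f(x), y − x⟩ + (1/2)‖y − x‖_x² + ‖y − x‖_x³ / (3(1 − ‖y − x‖_x)). -/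
open Set

/-- Elementary inequality: `-r - log (1-r) ≤ r²/2 + r³/(3(1-r))` for `0 ≤ r < 1`. -/
lemma SelfConcordantAux.logIneq {r : ℝ} (hr0 : 0 ≤ r) (hr1 : r < 1) :
    -r - Real.log (1 - r) ≤ r ^ 2 / 2 + r ^ 3 / (3 * (1 - r)) := by
  set φ : ℝ → ℝ := fun u => u ^ 2 / 2 + u ^ 3 / (3 * (1 - u)) + u + Real.log (1 - u) with hφ
  have key : ∀ u ∈ Icc (0:ℝ) r, HasDerivAt φ (u ^ 3 / (3 * (1 - u) ^ 2)) u := by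
    intro u hu
    have h1u : 1 - u ≠ 0 := by
      have : u < 1 := lt_of_le_of_lt hu.2 hr1
      intro h; linarith [h]
    have h3u : 3 * (1 - u) ≠ 0 := by
      intro h; apply h1u; linarith [h]
    have hd1 : HasDerivAt (fun v : ℝ => v ^ 2 / 2) u u := by
      simpa using ((hasDerivAt_pow 2 u).div_const 2)
    have hd2 : HasDerivAt (fun v : ℝ => v ^ 3 / (3 * (1 - v)))
        ((3 * u ^ 2 * (3 * (1 - u)) - u ^ 3 * (-3)) / (3 * (1 - u)) ^ 2) u := by
      have hnum : HasDerivAt (fun v : ℝ => v ^ 3) (3 * u ^ 2) u := by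
        simpa using hasDerivAt_pow 3 u
      have hden : HasDerivAt (fun v : ℝ => 3 * (1 - v)) (-3) u := by
        have : HasDerivAt (fun v : ℝ => 1 - v) (-1) u := by
          simpa using ((hasDerivAt_id u).const_sub 1)
        simpa using this.const_mul 3
      exact hnum.div hden h3u
    have hd3 : HasDerivAt (fun v : ℝ => Real.log (1 - v)) (-1 / (1 - u)) u := by
      have h : HasDerivAt (fun v : ℝ => 1 - v) (-1) u := by
        simpa using ((hasDerivAt_id u).const_sub 1)
      simpa using (h.log h1u)
    have := ((hd1.add hd2).add (hasDerivAt_id u)).add hd3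
    refine this.congr_deriv ?_
    field_simp
    ring
  have hmono : MonotoneOn φ (Icc 0 r) := by
    apply monotoneOn_of_deriv_nonneg (convex_Icc 0 r)
    · exact fun u hu => ((key u hu).continuousAt).continuousWithinAt
    · intro u hu
      rw [interior_Icc] at hu
      exact ((key u (Ioo_subset_Icc_self hu)).differentiableAt).differentiableWithinAt
    · intro u hu
      rw [interior_Icc] at hu
      rw [(key u (Ioo_subset_Icc_self hu)).deriv]
      have h1 : 0 < 1 - u := by linarith [hu.2, hr1]
      exact div_nonneg (pow_nonneg hu.1.le 3) (by positivity)
  have h0 : φ 0 = 0 := by simp [hφ]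
  have := hmono (left_mem_Icc.2 hr0) (right_mem_Icc.2 hr0) hr0
  rw [h0] at this
  simp only [hφ] at this
  linarith

/-- Comparison lemma (strict initial bound): a function whose derivative satisfies the
self-concordance differential inequality stays below the solution of `u' = u²`. -/
lemma SelfConcordantAux.compStrict (φ φd : ℝ → ℝ)
    (hφ : ∀ t ∈ Icc (0:ℝ) 1, HasDerivAt φ (φd t) t)
    (hSC : ∀ t ∈ Icc (0:ℝ) 1, |φd t| ≤ 2 * (φ t) ^ ((3:ℝ)/2))
    {ρ : ℝ} (hρ0 : 0 < ρ) (hρ1 : ρ < 1) (h0 : φ 0 < ρ ^ 2) :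
    ∀ s ∈ Icc (0:ℝ) 1, φ s ≤ ρ ^ 2 / (1 - ρ * s) ^ 2 := by
  intro s hs
  by_contra hcon
  push_neg at hcon
  set v : ℝ → ℝ := fun t => ρ / (1 - ρ * t) with hv
  have hden : ∀ t ∈ Icc (0:ℝ) 1, 0 < 1 - ρ * t := by
    intro t ht; nlinarith [ht.1, ht.2]
  have hvpos : ∀ t ∈ Icc (0:ℝ) 1, 0 < v t := fun t ht => div_pos hρ0 (hden t ht)
  have hvcont : ∀ t ∈ Icc (0:ℝ) 1, ContinuousAt v t := by
    intro t ht
    exact ContinuousAt.div continuousAt_const (by fun_prop) (ne_of_gt (hden t ht))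
  have hvsq : ∀ t, v t ^ 2 = ρ ^ 2 / (1 - ρ * t) ^ 2 := by
    intro t; rw [hv]; rw [div_pow]
  have hsub : Icc (0:ℝ) s ⊆ Icc 0 1 := Icc_subset_Icc le_rfl hs.2
  set A := Icc 0 s ∩ (fun t => φ t - v t ^ 2) ⁻¹' Iic 0 with hA
  have h0A : (0:ℝ) ∈ A := by
    constructor
    · exact left_mem_Icc.2 hs.1
    · simp only [mem_preimage, mem_Iic, sub_nonpos, hv]
      have : ρ / (1 - ρ * 0) = ρ := by norm_num
      rw [this]
      exact (le_of_lt h0)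
  have hAne : A.Nonempty := ⟨0, h0A⟩
  have hAbdd : BddAbove A := ⟨s, fun t ht => ht.1.2⟩
  have hAclosed : IsClosed A := by
    apply ContinuousOn.preimage_isClosed_of_isClosed _ isClosed_Icc isClosed_Iic
    intro t ht
    exact (((hφ t (hsub ht)).continuousAt.sub ((hvcont t (hsub ht)).pow 2))).continuousWithinAt
  set a := sSup A with ha
  have haA : a ∈ A := hAclosed.csSup_mem hAne hAbdd
  have haIcc : a ∈ Icc 0 s := haA.1
  have hsnA : s ∉ A := by
    intro h
    have := h.2
    simp only [mem_preimage, mem_Iic, sub_nonpos, hvsq] at this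
    linarith
  have halt : a < s := lt_of_le_of_ne haIcc.2 (fun h => hsnA (h ▸ haA))
  have hgt : ∀ t ∈ Ioc a s, v t ^ 2 < φ t := by
    intro t ht
    by_contra hle
    push_neg at hle
    have htA : t ∈ A := ⟨⟨le_trans haIcc.1 ht.1.le, ht.2⟩,
      by simpa [mem_preimage, mem_Iic, sub_nonpos] using hle⟩
    exact absurd (le_csSup hAbdd htA) (not_le.2 ht.1)
  have haIcc1 : a ∈ Icc (0:ℝ) 1 := hsub haIcc
  have hge : v a ^ 2 ≤ φ a := by
    have htend : Filter.Tendsto (fun t => φ t - v t ^ 2) (nhdsWithin a (Ioi a))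
        (nhds (φ a - v a ^ 2)) :=
      (((hφ a haIcc1).continuousAt.sub
        ((hvcont a haIcc1).pow 2))).tendsto.mono_left nhdsWithin_le_nhds
    have hev : ∀ᶠ t in nhdsWithin a (Ioi a), 0 ≤ φ t - v t ^ 2 := by
      filter_upwards [Ioc_mem_nhdsGT halt] with t ht
      exact le_of_lt (sub_pos.2 (hgt t ht))
    linarith [ge_of_tendsto htend hev]
  have haeq : φ a = v a ^ 2 := le_antisymm (by simpa [sub_nonpos] using haA.2) hge
  have hφpos : ∀ t ∈ Icc a s, 0 < φ t := by
    intro t ht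
    rcases eq_or_lt_of_le ht.1 with h | h
    · rw [← h, haeq]; exact pow_pos (hvpos a haIcc1) 2
    · exact lt_trans (pow_pos (hvpos t (hsub ⟨le_trans haIcc.1 ht.1, ht.2⟩)) 2) (hgt t ⟨h, ht.2⟩)
  have hsubas : Icc a s ⊆ Icc (0:ℝ) 1 := fun t ht => hsub ⟨le_trans haIcc.1 ht.1, ht.2⟩
  set χ : ℝ → ℝ := fun t => (Real.sqrt (φ t))⁻¹ with hχ
  have hχderiv : ∀ t ∈ Icc a s, HasDerivAt (fun u => χ u + u)
      (-(φd t / (2 * Real.sqrt (φ t))) / (Real.sqrt (φ t)) ^ 2 + 1) t := by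
    intro t ht
    have hpos := hφpos t ht
    have hsq : HasDerivAt (fun u => Real.sqrt (φ u)) (φd t / (2 * Real.sqrt (φ t))) t :=
      (hφ t (hsubas ht)).sqrt (ne_of_gt hpos)
    have hSne : Real.sqrt (φ t) ≠ 0 := ne_of_gt (Real.sqrt_pos.2 hpos)
    exact (hsq.inv hSne).add (hasDerivAt_id t)
  have hχmono : MonotoneOn (fun u => χ u + u) (Icc a s) := by
    apply monotoneOn_of_deriv_nonneg (convex_Icc a s)
    · exact fun t ht => ((hχderiv t ht).continuousAt).continuousWithinAt
    · intro t ht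
      rw [interior_Icc] at ht
      exact ((hχderiv t (Ioo_subset_Icc_self ht)).differentiableAt).differentiableWithinAt
    · intro t ht
      rw [interior_Icc] at ht
      have ht' := Ioo_subset_Icc_self ht
      rw [(hχderiv t ht').deriv]
      have hpos := hφpos t ht'
      set S := Real.sqrt (φ t) with hS
      have hSpos : 0 < S := Real.sqrt_pos.2 hpos
      have hφS : φ t = S ^ 2 := (Real.sq_sqrt hpos.le).symm
      have hbd : φd t ≤ 2 * S ^ 3 := by
        have h1 := hSC t (hsubas ht')
        have h2 : (φ t) ^ ((3:ℝ)/2) = S ^ 3 := by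
          rw [Real.rpow_div_two_eq_sqrt 3 hpos.le, ← hS]
          exact_mod_cast Real.rpow_natCast S 3
        calc φd t ≤ |φd t| := le_abs_self _
          _ ≤ 2 * (φ t) ^ ((3:ℝ)/2) := h1
          _ = 2 * S ^ 3 := by rw [h2]
      have heq : -(φd t / (2 * S)) / S ^ 2 + 1 = (2 * S ^ 3 - φd t) / (2 * S ^ 3) := by
        field_simp
        ring
      rw [heq]
      exact div_nonneg (by linarith) (by positivity)
  have hkey := hχmono (left_mem_Icc.2 halt.le) (right_mem_Icc.2 halt.le) halt.le
  have hva : 0 < v a := hvpos a haIcc1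
  have hχa : χ a = (v a)⁻¹ := by
    rw [hχ]
    simp only
    rw [haeq, Real.sqrt_sq hva.le]
  have hsIcc1 : s ∈ Icc (0:ℝ) 1 := hs
  have hvs : 0 < v s := hvpos s hsIcc1
  have hSspos : 0 < Real.sqrt (φ s) := Real.sqrt_pos.2 (hφpos s (right_mem_Icc.2 halt.le))
  have hφs : φ s = Real.sqrt (φ s) ^ 2 := (Real.sq_sqrt (hφpos s (right_mem_Icc.2 halt.le)).le).symm
  have hinva : (v a)⁻¹ + a = 1 / ρ := by
    rw [hv]
    simp only
    rw [inv_div]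
    field_simp
    ring
  replace hkey : χ a + a ≤ χ s + s := hkey
  rw [hχa, hinva] at hkey
  have hχs : (1 - ρ * s) / ρ ≤ (Real.sqrt (φ s))⁻¹ := by
    have : 1 / ρ - s ≤ χ s := by linarith
    rw [hχ] at this
    simp only at this
    calc (1 - ρ * s) / ρ = 1 / ρ - s := by field_simp
      _ ≤ _ := this
  have hfin : Real.sqrt (φ s) ≤ ρ / (1 - ρ * s) := by
    have hds : 0 < 1 - ρ * s := hden s hsIcc1
    have h2 : (1 - ρ * s) ≤ (Real.sqrt (φ s))⁻¹ * ρ := (div_le_iff₀ hρ0).mp hχs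
    rw [le_div_iff₀ hds]
    calc Real.sqrt (φ s) * (1 - ρ * s) ≤ Real.sqrt (φ s) * ((Real.sqrt (φ s))⁻¹ * ρ) :=
          mul_le_mul_of_nonneg_left h2 hSspos.le
      _ = ρ := by field_simp
  have : φ s ≤ ρ ^ 2 / (1 - ρ * s) ^ 2 := by
    rw [hφs, ← div_pow]
    exact pow_le_pow_left₀ hSspos.le hfin 2
  linarith

/-- Comparison lemma: the second directional derivative of a self-concordant function grows
at most like `r²/(1-rt)²`. -/
lemma SelfConcordantAux.comp (φ φd : ℝ → ℝ)
    (hφ : ∀ t ∈ Icc (0:ℝ) 1, HasDerivAt φ (φd t) t)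
    (hSC : ∀ t ∈ Icc (0:ℝ) 1, |φd t| ≤ 2 * (φ t) ^ ((3:ℝ)/2))
    {r : ℝ} (hr0 : 0 ≤ r) (hr1 : r < 1) (h0 : φ 0 ≤ r ^ 2) :
    ∀ t ∈ Icc (0:ℝ) 1, φ t ≤ r ^ 2 / (1 - r * t) ^ 2 := by
  intro t ht
  have key : ∀ ρ ∈ Ioo r 1, φ t ≤ ρ ^ 2 / (1 - ρ * t) ^ 2 := by
    intro ρ hρ
    exact SelfConcordantAux.compStrict φ φd hφ hSC (lt_of_le_of_lt hr0 hρ.1) hρ.2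
      (lt_of_le_of_lt h0 (by nlinarith [hρ.1, hr0])) t ht
  have hcont : ContinuousAt (fun ρ : ℝ => ρ ^ 2 / (1 - ρ * t) ^ 2) r := by
    have hd : (1 - r * t) ^ 2 ≠ 0 := by
      have : 0 < 1 - r * t := by nlinarith [ht.1, ht.2]
      positivity
    exact ContinuousAt.div (by fun_prop) (by fun_prop) hd
  have htend : Filter.Tendsto (fun ρ : ℝ => ρ ^ 2 / (1 - ρ * t) ^ 2)
      (nhdsWithin r (Ioi r)) (nhds (r ^ 2 / (1 - r * t) ^ 2)) :=
    hcont.tendsto.mono_left nhdsWithin_le_nhds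
  refine ge_of_tendsto htend ?_
  filter_upwards [Ioo_mem_nhdsGT hr1] with ρ hρ
  exact key ρ hρ

/-- One-dimensional version of the quadratic approximation bound. -/
lemma SelfConcordantAux.oneDimBound (g g1 g2 g3 : ℝ → ℝ) {r : ℝ} (hr0 : 0 ≤ r) (hr1 : r < 1)
    (hg : ∀ t ∈ Icc (0:ℝ) 1, HasDerivAt g (g1 t) t)
    (hg1 : ∀ t ∈ Icc (0:ℝ) 1, HasDerivAt g1 (g2 t) t)
    (hg2 : ∀ t ∈ Icc (0:ℝ) 1, HasDerivAt g2 (g3 t) t)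
    (hSC : ∀ t ∈ Icc (0:ℝ) 1, |g3 t| ≤ 2 * (g2 t) ^ ((3:ℝ)/2))
    (h0 : g2 0 ≤ r ^ 2) :
    g 1 ≤ g 0 + g1 0 + r ^ 2 / 2 + r ^ 3 / (3 * (1 - r)) := by
  have hbound := SelfConcordantAux.comp g2 g3 hg2 hSC hr0 hr1 h0
  have hden : ∀ t ∈ Icc (0:ℝ) 1, 0 < 1 - r * t := by
    intro t ht; nlinarith [ht.1, ht.2]
  have hlin : ∀ t : ℝ, HasDerivAt (fun u : ℝ => 1 - r * u) (-r) t := by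
    intro t
    simpa using ((hasDerivAt_id t).const_mul r).const_sub 1
  set B1 : ℝ → ℝ := fun t => -r + r / (1 - r * t) with hB1def
  have hB : ∀ t ∈ Icc (0:ℝ) 1,
      HasDerivAt (fun u => -(r * u) - Real.log (1 - r * u)) (B1 t) t := by
    intro t ht
    have hlog : HasDerivAt (fun u : ℝ => Real.log (1 - r * u)) (-r / (1 - r * t)) t :=
      (hlin t).log (ne_of_gt (hden t ht))
    have hneg : HasDerivAt (fun u : ℝ => -(r * u)) (-r) t := by
      have := ((hasDerivAt_id t).const_mul r).neg; simp at this; exact this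
    have := hneg.sub hlog
    refine this.congr_deriv ?_
    rw [hB1def]
    ring
  have hB1 : ∀ t ∈ Icc (0:ℝ) 1, HasDerivAt B1 (r ^ 2 / (1 - r * t) ^ 2) t := by
    intro t ht
    have hd : HasDerivAt (fun u : ℝ => r / (1 - r * u))
        ((0 * (1 - r * t) - r * (-r)) / (1 - r * t) ^ 2) t :=
      (hasDerivAt_const t r).div (hlin t) (ne_of_gt (hden t ht))
    have := hd.const_add (-r)
    refine this.congr_deriv ?_
    ring
  set h1 : ℝ → ℝ := fun t => g1 t - g1 0 - B1 t with hh1def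
  have hh1deriv : ∀ t ∈ Icc (0:ℝ) 1,
      HasDerivAt h1 (g2 t - r ^ 2 / (1 - r * t) ^ 2) t := by
    intro t ht
    have := ((hg1 t ht).sub_const (g1 0)).sub (hB1 t ht); exact this
  have hh1anti : AntitoneOn h1 (Icc 0 1) := by
    apply antitoneOn_of_deriv_nonpos (convex_Icc 0 1)
    · exact fun t ht => ((hh1deriv t ht).continuousAt).continuousWithinAt
    · intro t ht
      rw [interior_Icc] at ht
      exact ((hh1deriv t (Ioo_subset_Icc_self ht)).differentiableAt).differentiableWithinAt
    · intro t ht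
      rw [interior_Icc] at ht
      rw [(hh1deriv t (Ioo_subset_Icc_self ht)).deriv]
      have := hbound t (Ioo_subset_Icc_self ht)
      linarith
  have hh1zero : h1 0 = 0 := by
    rw [hh1def, hB1def]
    simp
  have hh1le : ∀ t ∈ Icc (0:ℝ) 1, h1 t ≤ 0 := by
    intro t ht
    have := hh1anti (left_mem_Icc.2 zero_le_one) ht ht.1
    rw [hh1zero] at this
    exact this
  set B : ℝ → ℝ := fun t => -(r * t) - Real.log (1 - r * t) with hBdef
  set h : ℝ → ℝ := fun t => g t - g 0 - g1 0 * t - B t with hhdef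
  have hhderiv : ∀ t ∈ Icc (0:ℝ) 1, HasDerivAt h (h1 t) t := by
    intro t ht
    have hlinpart : HasDerivAt (fun u : ℝ => g1 0 * u) (g1 0) t := by
      simpa using (hasDerivAt_id t).const_mul (g1 0)
    exact (((hg t ht).sub_const (g 0)).sub hlinpart).sub (hB t ht)
  have hhanti : AntitoneOn h (Icc 0 1) := by
    apply antitoneOn_of_deriv_nonpos (convex_Icc 0 1)
    · exact fun t ht => ((hhderiv t ht).continuousAt).continuousWithinAt
    · intro t ht
      rw [interior_Icc] at ht
      exact ((hhderiv t (Ioo_subset_Icc_self ht)).differentiableAt).differentiableWithinAt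
    · intro t ht
      rw [interior_Icc] at ht
      rw [(hhderiv t (Ioo_subset_Icc_self ht)).deriv]
      exact hh1le t (Ioo_subset_Icc_self ht)
  have hhzero : h 0 = 0 := by
    rw [hhdef, hBdef]
    simp
  have hfinal := hhanti (left_mem_Icc.2 zero_le_one) (right_mem_Icc.2 zero_le_one) zero_le_one
  rw [hhzero] at hfinal
  rw [hhdef, hBdef] at hfinal
  simp only at hfinal
  have hlog := SelfConcordantAux.logIneq hr0 hr1
  have hB1val : -(r * 1) - Real.log (1 - r * 1) = -r - Real.log (1 - r) := by norm_num
  rw [hB1val] at hfinal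
  linarith

/-- Quadratic approximation bound for self-concordant functions: if `‖y − x‖_x < 1` then
`f(y) ≤ f(x) + ⟨∇f(x), y − x⟩ + ½‖y − x‖_x² + ‖y − x‖_x³/(3(1 − ‖y − x‖_x))`. -/
theorem selfConcordant_quadApprox {n : ℕ} (Q : Set (EuclideanSpace ℝ (Fin n)))
    (hQ : Convex ℝ Q) (f : EuclideanSpace ℝ (Fin n) → ℝ) (hf : SelfConcordantOn Q f)
    (x y : EuclideanSpace ℝ (Fin n)) (hx : x ∈ interior Q) (hy : y ∈ interior Q)
    (hnorm : Real.sqrt (iteratedFDeriv ℝ 2 f x ![y - x, y - x]) < 1) :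
    f y ≤ f x + (inner ℝ (gradient f x) (y - x) : ℝ) +
        (1 / 2) * Real.sqrt (iteratedFDeriv ℝ 2 f x ![y - x, y - x]) ^ 2 +
        Real.sqrt (iteratedFDeriv ℝ 2 f x ![y - x, y - x]) ^ 3 /
          (3 * (1 - Real.sqrt (iteratedFDeriv ℝ 2 f x ![y - x, y - x]))) := by
  obtain ⟨hC, hSCf⟩ := hf
  have hSopen : IsOpen (interior Q) := isOpen_interior
  have hSconv : Convex ℝ (interior Q) := hQ.interior
  set d := y - x with hd
  set c : ℝ → EuclideanSpace ℝ (Fin n) := fun u => x + u • d with hc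
  have hct : ∀ t ∈ Icc (0:ℝ) 1, c t ∈ interior Q := by
    intro t ht
    have h1 : c t = (1 - t) • x + t • y := by
      rw [hc]
      simp only
      rw [hd]
      module
    rw [h1]
    exact hSconv hx hy (by linarith [ht.2]) ht.1 (by ring)
  have hcd : ∀ u : ℝ, HasDerivAt c d u := by
    intro u
    have : HasDerivAt (fun v : ℝ => v • d) ((1:ℝ) • d) u := (hasDerivAt_id u).smul_const d
    have := this.const_add x; simp only [one_smul] at this; exact this
  have hCA : ∀ z ∈ interior Q, ContDiffAt ℝ 3 f z := fun z hz =>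
    (hC z hz).contDiffAt (hSopen.mem_nhds hz)
  set F1 := fderiv ℝ f with hF1
  set F2 := fderiv ℝ F1 with hF2
  set F3 := fderiv ℝ F2 with hF3
  -- identification of iterated derivatives
  have i2 : ∀ z, iteratedFDeriv ℝ 2 f z ![d, d] = F2 z d d := by
    intro z
    rw [iteratedFDeriv_two_apply]
    rfl
  have i3 : ∀ z, iteratedFDeriv ℝ 3 f z ![d, d, d] = F3 z d d d := by
    intro z
    rw [iteratedFDeriv_succ_apply_right]
    have hinit : Fin.init ![d, d, d] = ![d, d] := by
      funext i
      fin_cases i <;> rfl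
    rw [hinit, iteratedFDeriv_two_apply]
    have hlast : ![d, d, d] (Fin.last 2) = d := rfl
    rw [hlast]
    rfl
  -- derivatives along the segment
  set g : ℝ → ℝ := fun t => f (c t) with hg_def
  set g1 : ℝ → ℝ := fun t => F1 (c t) d with hg1_def
  set g2 : ℝ → ℝ := fun t => F2 (c t) d d with hg2_def
  set g3 : ℝ → ℝ := fun t => F3 (c t) d d d with hg3_def
  have hg : ∀ t ∈ Icc (0:ℝ) 1, HasDerivAt g (g1 t) t := by
    intro t ht
    have hz := hCA (c t) (hct t ht)
    have hfd : DifferentiableAt ℝ f (c t) := hz.differentiableAt (by norm_num)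
    exact hfd.hasFDerivAt.comp_hasDerivAt t (hcd t)
  have hg1 : ∀ t ∈ Icc (0:ℝ) 1, HasDerivAt g1 (g2 t) t := by
    intro t ht
    have hz := hCA (c t) (hct t ht)
    have hF1C : ContDiffAt ℝ 2 F1 (c t) := hz.fderiv_right (m := 2) (by norm_num)
    have hF1d : DifferentiableAt ℝ F1 (c t) := hF1C.differentiableAt (by norm_num)
    have hA := (ContinuousLinearMap.apply ℝ ℝ d).hasFDerivAt.comp (c t) hF1d.hasFDerivAt
    exact hA.comp_hasDerivAt t (hcd t)
  have hg2 : ∀ t ∈ Icc (0:ℝ) 1, HasDerivAt g2 (g3 t) t := by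
    intro t ht
    have hz := hCA (c t) (hct t ht)
    have hF1C : ContDiffAt ℝ 2 F1 (c t) := hz.fderiv_right (m := 2) (by norm_num)
    have hF2C : ContDiffAt ℝ 1 F2 (c t) := hF1C.fderiv_right (m := 1) (by norm_num)
    have hF2d : DifferentiableAt ℝ F2 (c t) := hF2C.differentiableAt (by norm_num)
    have hA := (ContinuousLinearMap.apply ℝ ℝ d).hasFDerivAt.comp (c t)
      (hF2d.hasFDerivAt.clm_apply (hasFDerivAt_const d (c t)))
    exact (hA.comp_hasDerivAt t (hcd t)).congr_deriv (by simp [hg3_def, hF3])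
  -- self-concordance along the segment
  have hSC' : ∀ t ∈ Icc (0:ℝ) 1, |g3 t| ≤ 2 * (g2 t) ^ ((3:ℝ)/2) := by
    intro t ht
    have := hSCf (c t) (hct t ht) d
    rw [i2, i3] at this
    exact this
  -- initial data
  have hc0 : c 0 = x := by rw [hc]; simp
  have hc1 : c 1 = y := by rw [hc]; simp [hd]
  set r := Real.sqrt (iteratedFDeriv ℝ 2 f x ![d, d]) with hr
  have hr0 : 0 ≤ r := Real.sqrt_nonneg _
  have h0 : g2 0 ≤ r ^ 2 := by
    have hq : g2 0 = iteratedFDeriv ℝ 2 f x ![d, d] := by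
      rw [hg2_def]
      simp only
      rw [hc0, i2]
    rw [hq]
    rcases le_or_gt 0 (iteratedFDeriv ℝ 2 f x ![d, d]) with h | h
    · rw [hr, Real.sq_sqrt h]
    · have hr' : r = 0 := by rw [hr]; exact Real.sqrt_eq_zero_of_nonpos h.le
      rw [hr']
      simpa using h.le
  have main := SelfConcordantAux.oneDimBound g g1 g2 g3 hr0 hnorm hg hg1 hg2 hSC' h0
  have hgy : g 1 = f y := by rw [hg_def]; simp only; rw [hc1]
  have hgx : g 0 = f x := by rw [hg_def]; simp only; rw [hc0]
  have hg1x : g1 0 = (inner ℝ (gradient f x) d : ℝ) := by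
    rw [hg1_def]
    simp only
    rw [hc0]
    have hgrad : gradient f x = (InnerProductSpace.toDual ℝ _).symm (F1 x) := rfl
    rw [hgrad]
    exact (InnerProductSpace.toDual_symm_apply).symm
  rw [hgy, hgx, hg1x] at main
  linarith
end

section
/- Let ψ be a ν-self-concordant barrier on int(𝒦) for a convex set 𝒦 ⊆ ℝ^d, let c ∈ ℝ^d, and define E(t) = min_x [t⟨c,x⟩ + ψ(x)] with minimizer x_t. Then for 0 ≤ h ≤ 1/√ν: E(t) + th⟨x_t, c⟩ ≥ E(t(1+h)) ≥ E(t) + th⟨c, x_t⟩ − h²ν. -/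
open Set

/-- Bounds on the change of `E(t) = min_x [t⟨c,x⟩ + ψ(x)]` when `t` is scaled by `1 + h`,
for a `ν`-self-concordant barrier `ψ`:
`E(t) + th⟨x_t, c⟩ ≥ E(t(1+h)) ≥ E(t) + th⟨c, x_t⟩ − h²ν` for `0 ≤ h ≤ 1/√ν`. -/
theorem barrier_Et_bounds {d : ℕ} (K : Set (EuclideanSpace ℝ (Fin d))) (hK : Convex ℝ K)
    (ν : ℝ) (hν : 0 < ν) (ψ : EuclideanSpace ℝ (Fin d) → ℝ)
    (hψ : IsSelfConcordantBarrier ν K ψ)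
    (c : EuclideanSpace ℝ (Fin d)) (E : ℝ → ℝ) (xt : ℝ → EuclideanSpace ℝ (Fin d))
    (hxt : ∀ t, xt t ∈ interior K)
    (hmin : ∀ t : ℝ, ∀ x ∈ interior K,
      t * (inner ℝ c (xt t) : ℝ) + ψ (xt t) ≤ t * (inner ℝ c x : ℝ) + ψ x)
    (hE : ∀ t : ℝ, E t = t * (inner ℝ c (xt t) : ℝ) + ψ (xt t))
    (t h : ℝ) (ht : 0 < t) (hh0 : 0 ≤ h) (hh1 : h ≤ 1 / Real.sqrt ν) :
    E (t * (1 + h)) ≤ E t + t * h * (inner ℝ (xt t) c : ℝ) ∧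
    E t + h * t * (inner ℝ c (xt t) : ℝ) - h ^ 2 * ν ≤ E (t * (1 + h)) := by
  obtain ⟨⟨hsmooth, _⟩, hbar⟩ := hψ
  have hIopen : IsOpen (interior K) := isOpen_interior
  have hCD : ∀ x ∈ interior K, ContDiffAt ℝ 3 ψ x := fun x hx =>
    hsmooth.contDiffAt (hIopen.mem_nhds hx)
  have hdiff : ∀ x ∈ interior K, DifferentiableAt ℝ ψ x := fun x hx =>
    (hCD x hx).differentiableAt (by norm_num)
  -- gradient at the minimizers
  have hgrad : ∀ τ : ℝ, ∀ v : EuclideanSpace ℝ (Fin d),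
      fderiv ℝ ψ (xt τ) v = -(τ * (inner ℝ c v : ℝ)) := by
    intro τ v
    have h1 : HasFDerivAt (fun x : EuclideanSpace ℝ (Fin d) => τ * (inner ℝ c x : ℝ))
        (τ • (innerSL ℝ c)) (xt τ) := ((innerSL ℝ c).hasFDerivAt).const_mul τ
    have h2 : HasFDerivAt ψ (fderiv ℝ ψ (xt τ)) (xt τ) :=
      (hdiff _ (hxt τ)).hasFDerivAt
    have hF : HasFDerivAt (fun x => τ * (inner ℝ c x : ℝ) + ψ x)
        (τ • (innerSL ℝ c) + fderiv ℝ ψ (xt τ)) (xt τ) := h1.add h2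
    have hlm : IsLocalMin (fun x => τ * (inner ℝ c x : ℝ) + ψ x) (xt τ) :=
      Filter.eventually_of_mem (hIopen.mem_nhds (hxt τ)) (fun x hx => hmin τ x hx)
    have hz : τ • (innerSL ℝ c) + fderiv ℝ ψ (xt τ) = 0 := by
      rw [← hF.fderiv]; exact hlm.fderiv_eq_zero
    have := congrFun (congrArg DFunLike.coe hz) v
    simp only [ContinuousLinearMap.add_apply, ContinuousLinearMap.coe_smul',
      Pi.smul_apply, innerSL_apply_apply, smul_eq_mul, ContinuousLinearMap.zero_apply] at this
    linarith
  set s := t * (1 + h) with hs_def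
  have hEt := hE t
  have hEs := hE s
  have hup : E s ≤ E t + t * h * (inner ℝ (xt t) c : ℝ) := by
    have h1 := hmin s (xt t) (hxt t)
    have h2 : (inner ℝ (xt t) c : ℝ) = (inner ℝ c (xt t) : ℝ) := real_inner_comm _ _
    have h3 : s * (inner ℝ c (xt t) : ℝ) = t * (inner ℝ c (xt t) : ℝ)
        + t * h * (inner ℝ c (xt t) : ℝ) := by rw [hs_def]; ring
    rw [hEs, hEt, h2]
    linarith
  refine ⟨hup, ?_⟩
  -- the key inequality
  have hKey : t * ((inner ℝ c (xt t) : ℝ) - (inner ℝ c (xt s) : ℝ)) ≤ h * ν := by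
    rcases eq_or_lt_of_le hh0 with hh | hpos
    · have hst : s = t := by rw [hs_def, ← hh]; ring
      rw [hst]; simp [← hh]
    set w : EuclideanSpace ℝ (Fin d) := xt s - xt t with hw_def
    set x : ℝ → EuclideanSpace ℝ (Fin d) := fun u => xt t + u • w with hx_def
    have hxmem : ∀ u ∈ Icc (0:ℝ) 1, x u ∈ interior K := by
      intro u hu
      have hconv : x u = (1 - u) • xt t + u • xt s := by
        rw [hx_def]; simp only [hw_def, smul_sub, sub_smul, one_smul]; abel
      rw [hconv]
      exact hK.interior (hxt t) (hxt s) (by linarith [hu.2]) hu.1 (by ring)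
    have hline : ∀ u : ℝ, HasDerivAt x w u := by
      intro u
      have : HasDerivAt (fun y : ℝ => y • w) ((1:ℝ) • w) u :=
        (hasDerivAt_id u).smul_const w
      have h' := this.const_add (xt t)
      rw [one_smul] at h'
      exact h'
    set p : ℝ → ℝ := fun u => fderiv ℝ ψ (x u) w with hp_def
    set q : ℝ → ℝ := fun u => fderiv ℝ (fderiv ℝ ψ) (x u) w w with hq_def
    have hp : ∀ u ∈ Icc (0:ℝ) 1, HasDerivAt p (q u) u := by
      intro u hu
      have hx2 : ContDiffAt ℝ 2 (fderiv ℝ ψ) (x u) :=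
        (hCD _ (hxmem u hu)).fderiv_right (by norm_num)
      have hB : HasFDerivAt (fderiv ℝ ψ) (fderiv ℝ (fderiv ℝ ψ) (x u)) (x u) :=
        (hx2.differentiableAt (by norm_num)).hasFDerivAt
      have h1 : HasDerivAt (fun y : ℝ => fderiv ℝ ψ (x y))
          (fderiv ℝ (fderiv ℝ ψ) (x u) w) u := hB.comp_hasDerivAt u (hline u)
      have := h1.clm_apply (hasDerivAt_const u w)
      simpa using this
    have hineq : ∀ u ∈ Icc (0:ℝ) 1, (p u) ^ 2 ≤ ν * q u := by
      intro u hu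
      have := hbar (x u) (hxmem u hu) w
      simpa [iteratedFDeriv_one_apply, iteratedFDeriv_two_apply] using this
    have hqnn : ∀ u ∈ Icc (0:ℝ) 1, 0 ≤ q u := by
      intro u hu
      nlinarith [hineq u hu, sq_nonneg (p u)]
    have hx0 : x 0 = xt t := by simp [hx_def]
    have hx1 : x 1 = xt s := by simp [hx_def, hw_def]
    have hcw : (inner ℝ c w : ℝ) = (inner ℝ c (xt s) : ℝ) - (inner ℝ c (xt t) : ℝ) := by
      rw [hw_def, inner_sub_right]
    set P : ℝ := t * ((inner ℝ c (xt t) : ℝ) - (inner ℝ c (xt s) : ℝ)) with hP_def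
    have hp0 : p 0 = P := by
      rw [hp_def]; simp only [hx0]; rw [hgrad t w, hcw, hP_def]; ring
    have hp1 : p 1 = (1 + h) * P := by
      rw [hp_def]; simp only [hx1]; rw [hgrad s w, hcw, hP_def, hs_def]; ring
    have hmono : MonotoneOn p (Icc 0 1) := by
      apply monotoneOn_of_deriv_nonneg (convex_Icc 0 1)
      · exact fun u hu => (hp u hu).continuousAt.continuousWithinAt
      · intro u hu
        rw [interior_Icc] at hu
        exact ((hp u (Ioo_subset_Icc_self hu)).differentiableAt).differentiableWithinAt
      · intro u hu
        rw [interior_Icc] at hu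
        rw [(hp u (Ioo_subset_Icc_self hu)).deriv]
        exact hqnn u (Ioo_subset_Icc_self hu)
    show P ≤ h * ν
    rcases le_or_gt P 0 with hP | hP
    · exact hP.trans (by positivity)
    have hppos : ∀ u ∈ Icc (0:ℝ) 1, 0 < p u := by
      intro u hu
      have := hmono (left_mem_Icc.mpr zero_le_one) hu hu.1
      rw [hp0] at this; linarith
    -- m u = (p u)⁻¹ + u / ν is antitone
    set m : ℝ → ℝ := fun u => (p u)⁻¹ + u / ν with hm_def
    have hm : ∀ u ∈ Icc (0:ℝ) 1, HasDerivAt m (-(q u) / (p u) ^ 2 + 1 / ν) u := by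
      intro u hu
      exact ((hp u hu).inv (ne_of_gt (hppos u hu))).add ((hasDerivAt_id u).div_const ν)
    have hanti : AntitoneOn m (Icc 0 1) := by
      apply antitoneOn_of_deriv_nonpos (convex_Icc 0 1)
      · exact fun u hu => (hm u hu).continuousAt.continuousWithinAt
      · intro u hu
        rw [interior_Icc] at hu
        exact ((hm u (Ioo_subset_Icc_self hu)).differentiableAt).differentiableWithinAt
      · intro u hu
        rw [interior_Icc] at hu
        have hu' := Ioo_subset_Icc_self hu
        rw [(hm u hu').deriv]
        have hpu := hppos u hu'
        have h2 : (0:ℝ) < (p u) ^ 2 := by positivity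
        have hdivle : 1 / ν ≤ q u / (p u) ^ 2 := by
          rw [div_le_div_iff₀ hν h2]
          nlinarith [hineq u hu']
        have : -(q u) / (p u) ^ 2 = -(q u / (p u) ^ 2) := by ring
        linarith [this ▸ le_refl (-(q u) / (p u) ^ 2), hdivle,
          (neg_div (p u ^ 2) (q u))]
    have hm10 : m 1 ≤ m 0 :=
      hanti (left_mem_Icc.mpr zero_le_one) (right_mem_Icc.mpr zero_le_one) zero_le_one
    have hm0 : m 0 = P⁻¹ := by rw [hm_def]; simp [hp0]
    have hm1 : m 1 = ((1 + h) * P)⁻¹ + 1 / ν := by rw [hm_def]; simp [hp1]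
    rw [hm0, hm1] at hm10
    have h1p : (0:ℝ) < 1 + h := by linarith
    have hdiff2 : P⁻¹ - ((1 + h) * P)⁻¹ = h / ((1 + h) * P) := by
      field_simp
      ring
    have hfin : 1 / ν ≤ h / ((1 + h) * P) := by
      rw [← hdiff2]; linarith
    rw [div_le_div_iff₀ hν (by positivity)] at hfin
    have hstep : P ≤ (1 + h) * P := le_mul_of_one_le_left hP.le (by linarith)
    have hfin' : (1 + h) * P ≤ h * ν := by linarith
    linarith
  -- conclude the lower bound
  have hlow1 : E t + t * h * (inner ℝ c (xt s) : ℝ) ≤ E s := by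
    have h1 := hmin t (xt s) (hxt s)
    have h3 : s * (inner ℝ c (xt s) : ℝ) = t * (inner ℝ c (xt s) : ℝ)
        + t * h * (inner ℝ c (xt s) : ℝ) := by rw [hs_def]; ring
    rw [hEs, hEt]
    linarith
  have := mul_le_mul_of_nonneg_left hKey hh0
  nlinarith [hlow1, this]
end

section
/- Let f : 2^V → ℝ be a submodular function with f(∅) = 0 and let f̂ be its Lovász extension. Then f̂ is convex on [0,1]^V and min over x ∈ [0,1]^V of f̂(x) equals min over S ⊆ V of f(S). -/
open Set MeasureTheory

/-- Submodularity of a set function: diminishing marginal differences. -/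
def Submodular {n : ℕ} (f : Finset (Fin n) → ℝ) : Prop :=
  ∀ S T : Finset (Fin n), ∀ i : Fin n, S ⊆ T → i ∉ T →
    f (insert i T) - f T ≤ f (insert i S) - f S

open Classical in
/-- The Lovász extension `f̂(x) = E_{t ∼ Unif[0,1]} [f({i : x_i ≥ t})]`. -/
noncomputable def lovasz {n : ℕ} (f : Finset (Fin n) → ℝ) (x : Fin n → ℝ) : ℝ :=
  ∫ t in Set.Ioc (0 : ℝ) 1, f (Finset.univ.filter fun i => t ≤ x i)

namespace LovaszAux

open Classical in
noncomputable def levelSet {n : ℕ} (x : Fin n → ℝ) (t : ℝ) : Finset (Fin n) :=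
  Finset.univ.filter fun i => t ≤ x i

lemma lovasz_eq {n : ℕ} (f : Finset (Fin n) → ℝ) (x : Fin n → ℝ) :
    lovasz f x = ∫ t in Set.Ioc (0 : ℝ) 1, f (levelSet x t) := rfl

lemma mem_levelSet {n : ℕ} {x : Fin n → ℝ} {t : ℝ} {i : Fin n} :
    i ∈ levelSet x t ↔ t ≤ x i := by
  classical simp [levelSet]

def pref {n : ℕ} (σ : Equiv.Perm (Fin n)) (k : ℕ) : Finset (Fin n) :=
  Finset.univ.filter fun j => (σ.symm j : ℕ) < k

lemma mem_pref {n : ℕ} {σ : Equiv.Perm (Fin n)} {k : ℕ} {j : Fin n} :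
    j ∈ pref σ k ↔ (σ.symm j : ℕ) < k := by simp [pref]

lemma pref_zero {n : ℕ} (σ : Equiv.Perm (Fin n)) : pref σ 0 = ∅ := by
  simp [pref]

lemma pref_succ {n : ℕ} (σ : Equiv.Perm (Fin n)) {k : ℕ} (hk : k < n) :
    pref σ (k + 1) = insert (σ ⟨k, hk⟩) (pref σ k) := by
  ext j
  simp only [mem_pref, Finset.mem_insert, Nat.lt_succ_iff_lt_or_eq]
  constructor
  · rintro (h | h)
    · exact Or.inr h
    · left
      have : σ.symm j = ⟨k, hk⟩ := Fin.ext h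
      rw [← this, Equiv.apply_symm_apply]
  · rintro (h | h)
    · right; rw [h, Equiv.symm_apply_apply]
    · exact Or.inl h

lemma notmem_pref {n : ℕ} (σ : Equiv.Perm (Fin n)) {k : ℕ} (hk : k < n) :
    σ ⟨k, hk⟩ ∉ pref σ k := by
  simp [mem_pref]


noncomputable def gw {n : ℕ} (f : Finset (Fin n) → ℝ) (σ : Equiv.Perm (Fin n)) (i : Fin n) : ℝ :=
  f (pref σ ((σ.symm i : ℕ) + 1)) - f (pref σ (σ.symm i : ℕ))

lemma sum_gw_pref {n : ℕ} (f : Finset (Fin n) → ℝ) (σ : Equiv.Perm (Fin n)) :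
    ∀ k, k ≤ n → ∑ i ∈ pref σ k, gw f σ i = f (pref σ k) - f ∅ := by
  intro k
  induction k with
  | zero => intro _; simp [pref_zero]
  | succ k ih =>
    intro hk
    have hk' : k < n := hk
    have h1 : gw f σ (σ ⟨k, hk'⟩) = f (pref σ (k + 1)) - f (pref σ k) := by
      simp [gw, Equiv.symm_apply_apply]
    rw [pref_succ σ hk', Finset.sum_insert (notmem_pref σ hk'), ih (le_of_lt hk'),
      ← pref_succ σ hk', h1]
    ring

lemma downclosed_mem_iff {n : ℕ} {D : Finset (Fin n)}
    (h : ∀ a ∈ D, ∀ b, b ≤ a → b ∈ D) (a : Fin n) :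
    a ∈ D ↔ (a : ℕ) < D.card := by
  constructor
  · intro ha
    have hsub : Finset.Iic a ⊆ D := fun b hb => h a ha b (Finset.mem_Iic.mp hb)
    have := Finset.card_le_card hsub
    rw [Fin.card_Iic] at this
    omega
  · intro ha
    by_contra hna
    have hsub : D ⊆ Finset.Iio a := by
      intro b hb
      rw [Finset.mem_Iio]
      by_contra hba
      exact hna (h b hb a (le_of_not_gt hba))
    have := Finset.card_le_card hsub
    rw [Fin.card_Iio] at this
    omega

lemma levelSet_eq_pref {n : ℕ} {x : Fin n → ℝ} {σ : Equiv.Perm (Fin n)}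
    (hσ : ∀ a b : Fin n, a ≤ b → x (σ b) ≤ x (σ a)) (t : ℝ) :
    ∃ k ≤ n, levelSet x t = pref σ k := by
  classical
  set D : Finset (Fin n) := Finset.univ.filter (fun a => σ a ∈ levelSet x t) with hD
  have hdc : ∀ a ∈ D, ∀ b, b ≤ a → b ∈ D := by
    intro a ha b hba
    simp only [hD, Finset.mem_filter, Finset.mem_univ, true_and, mem_levelSet] at ha ⊢
    exact le_trans ha (hσ b a hba)
  refine ⟨D.card, le_trans (Finset.card_filter_le _ _) (by simp), ?_⟩
  ext j
  rw [mem_pref]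
  have hj : j ∈ levelSet x t ↔ σ.symm j ∈ D := by
    simp [hD, mem_levelSet, Equiv.apply_symm_apply]
  rw [hj, downclosed_mem_iff hdc]

lemma sum_gw_le {n : ℕ} {f : Finset (Fin n) → ℝ} (hsub : Submodular f) (h0 : f ∅ = 0)
    (σ : Equiv.Perm (Fin n)) (A : Finset (Fin n)) :
    ∑ i ∈ A, gw f σ i ≤ f A := by
  induction A using Finset.strongInduction with
  | _ A ih =>
    rcases A.eq_empty_or_nonempty with rfl | hA
    · simp [h0]
    · obtain ⟨i, hiA, hmax⟩ := Finset.exists_max_image A (fun j => σ.symm j) hA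
      set k : ℕ := (σ.symm i : ℕ) with hkdef
      have hk : k < n := (σ.symm i).isLt
      set A' := A.erase i with hA'
      have hA'sub : A' ⊆ pref σ k := by
        intro j hj
        rw [mem_pref]
        have hji : j ≠ i := Finset.ne_of_mem_erase hj
        have hle : σ.symm j ≤ σ.symm i := hmax j (Finset.mem_of_mem_erase hj)
        have hne : σ.symm j ≠ σ.symm i := fun h => hji (σ.symm.injective h)
        exact lt_of_le_of_ne (Fin.le_iff_val_le_val.mp hle) (fun h => hne (Fin.ext h))
      have hipref : i ∉ pref σ k := by rw [mem_pref]; omega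
      have hins : insert i (pref σ k) = pref σ (k + 1) := by
        rw [pref_succ σ hk]
        congr 1
        have : (⟨k, hk⟩ : Fin n) = σ.symm i := Fin.ext rfl
        rw [this, Equiv.apply_symm_apply]
      have hgwi : gw f σ i = f (insert i (pref σ k)) - f (pref σ k) := by
        rw [hins]; rfl
      have hsm := hsub A' (pref σ k) i hA'sub hipref
      have hAins : insert i A' = A := Finset.insert_erase hiA
      have hsum : ∑ j ∈ A, gw f σ j = gw f σ i + ∑ j ∈ A', gw f σ j := by
        rw [hA', Finset.add_sum_erase A _ hiA]
      have hih := ih A' (Finset.erase_ssubset hiA)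
      rw [hsum, hgwi]
      rw [hAins] at hsm
      linarith

lemma exists_sort {n : ℕ} (x : Fin n → ℝ) :
    ∃ σ : Equiv.Perm (Fin n), ∀ a b : Fin n, a ≤ b → x (σ b) ≤ x (σ a) := by
  refine ⟨(Fin.revPerm).trans (Tuple.sort x), fun a b hab => ?_⟩
  have h1 : b.rev ≤ a.rev := Fin.rev_le_rev.mpr hab
  have := Tuple.monotone_sort x h1
  simpa using this

lemma sum_levelSet_rep {n : ℕ} (x w : Fin n → ℝ) :
    (fun t => ∑ i ∈ levelSet x t, w i)
      = fun t => ∑ i : Fin n, Set.indicator (Set.Iic (x i)) (fun _ => w i) t := by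
  classical
  funext t
  rw [levelSet, Finset.sum_filter]
  refine Finset.sum_congr rfl fun i _ => ?_
  rw [Set.indicator_apply]
  simp [Set.mem_Iic]

lemma indicator_integrableOn {n : ℕ} (x w : Fin n → ℝ) (i : Fin n) :
    IntegrableOn (fun t => Set.indicator (Set.Iic (x i)) (fun _ => w i) t)
      (Set.Ioc (0 : ℝ) 1) volume := by
  have hc : IntegrableOn (fun _ : ℝ => w i) (Set.Ioc (0 : ℝ) 1) volume :=
    integrableOn_const (by simp [Real.volume_Ioc])
  exact hc.indicator measurableSet_Iic

lemma sum_levelSet_integrableOn {n : ℕ} (x w : Fin n → ℝ) :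
    IntegrableOn (fun t => ∑ i ∈ levelSet x t, w i) (Set.Ioc (0 : ℝ) 1) volume := by
  rw [sum_levelSet_rep]
  exact integrable_finset_sum _ fun i _ => indicator_integrableOn x w i

lemma integral_sum_levelSet {n : ℕ} {x : Fin n → ℝ}
    (hx : x ∈ Set.Icc (0 : Fin n → ℝ) 1) (w : Fin n → ℝ) :
    ∫ t in Set.Ioc (0 : ℝ) 1, (∑ i ∈ levelSet x t, w i) = ∑ i, w i * x i := by
  rw [sum_levelSet_rep]
  rw [integral_finset_sum _ fun i _ => indicator_integrableOn x w i]
  refine Finset.sum_congr rfl fun i _ => ?_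
  have h0i : (0 : ℝ) ≤ x i := hx.1 i
  have h1i : x i ≤ 1 := hx.2 i
  rw [setIntegral_indicator measurableSet_Iic]
  have hset : Set.Ioc (0 : ℝ) 1 ∩ Set.Iic (x i) = Set.Ioc 0 (x i) := by
    ext t
    simp only [Set.mem_inter_iff, Set.mem_Ioc, Set.mem_Iic]
    constructor
    · rintro ⟨⟨h1, _⟩, h2⟩; exact ⟨h1, h2⟩
    · rintro ⟨h1, h2⟩; exact ⟨⟨h1, le_trans h2 h1i⟩, h2⟩
  rw [hset, setIntegral_const]
  simp [Real.volume_Ioc, ENNReal.toReal_ofReal h0i, max_eq_left h0i, mul_comm]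

lemma f_levelSet_rep {n : ℕ} {f : Finset (Fin n) → ℝ} (h0 : f ∅ = 0) {x : Fin n → ℝ}
    {σ : Equiv.Perm (Fin n)} (hσ : ∀ a b : Fin n, a ≤ b → x (σ b) ≤ x (σ a)) (t : ℝ) :
    f (levelSet x t) = ∑ i ∈ levelSet x t, gw f σ i := by
  obtain ⟨k, hk, heq⟩ := levelSet_eq_pref hσ t
  rw [heq, sum_gw_pref f σ k hk, h0, sub_zero]

lemma lovasz_integrand_integrableOn {n : ℕ} (f : Finset (Fin n) → ℝ) (h0 : f ∅ = 0)
    (x : Fin n → ℝ) :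
    IntegrableOn (fun t => f (levelSet x t)) (Set.Ioc (0 : ℝ) 1) volume := by
  obtain ⟨σ, hσ⟩ := exists_sort x
  have : (fun t => f (levelSet x t)) = fun t => ∑ i ∈ levelSet x t, gw f σ i :=
    funext fun t => f_levelSet_rep h0 hσ t
  rw [this]
  exact sum_levelSet_integrableOn x _

lemma lovasz_eq_ip {n : ℕ} (f : Finset (Fin n) → ℝ) (h0 : f ∅ = 0) {x : Fin n → ℝ}
    (hx : x ∈ Set.Icc (0 : Fin n → ℝ) 1) {σ : Equiv.Perm (Fin n)}
    (hσ : ∀ a b : Fin n, a ≤ b → x (σ b) ≤ x (σ a)) :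
    lovasz f x = ∑ i, gw f σ i * x i := by
  rw [lovasz_eq]
  have : (fun t => f (levelSet x t)) = fun t => ∑ i ∈ levelSet x t, gw f σ i :=
    funext fun t => f_levelSet_rep h0 hσ t
  rw [this, integral_sum_levelSet hx]

lemma ip_le_lovasz {n : ℕ} {f : Finset (Fin n) → ℝ} (hsub : Submodular f) (h0 : f ∅ = 0)
    {x : Fin n → ℝ} (hx : x ∈ Set.Icc (0 : Fin n → ℝ) 1) (σ : Equiv.Perm (Fin n)) :
    ∑ i, gw f σ i * x i ≤ lovasz f x := by
  rw [lovasz_eq, ← integral_sum_levelSet hx (gw f σ)]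
  exact setIntegral_mono_on (sum_levelSet_integrableOn x _)
    (lovasz_integrand_integrableOn f h0 x) measurableSet_Ioc
    (fun t _ => sum_gw_le hsub h0 σ _)

end LovaszAux

open LovaszAux in
/-- The Lovász extension of a submodular function is convex on `[0,1]^V`, and its minimum
over `[0,1]^V` equals the minimum of `f` over subsets. -/
theorem lovasz_convex_min {n : ℕ} (f : Finset (Fin n) → ℝ)
    (hsub : Submodular f) (h0 : f ∅ = 0) :
    ConvexOn ℝ (Set.Icc (0 : Fin n → ℝ) 1) (lovasz f) ∧
    sInf (lovasz f '' Set.Icc (0 : Fin n → ℝ) 1) = sInf (Set.range f) := by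
  have hcvx : Convex ℝ (Set.Icc (0 : Fin n → ℝ) 1) := by
    rw [← Set.pi_univ_Icc]
    exact convex_pi fun i _ => convex_Icc _ _
  constructor
  · refine ⟨hcvx, ?_⟩
    intro x hx y hy a b ha hb hab
    have hz : a • x + b • y ∈ Set.Icc (0 : Fin n → ℝ) 1 := hcvx hx hy ha hb hab
    obtain ⟨σ, hσ⟩ := exists_sort (a • x + b • y)
    have he := lovasz_eq_ip f h0 hz hσ
    have hx' := ip_le_lovasz hsub h0 hx σ
    have hy' := ip_le_lovasz hsub h0 hy σ
    have hlin : ∑ i, gw f σ i * (a • x + b • y) i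
        = a * ∑ i, gw f σ i * x i + b * ∑ i, gw f σ i * y i := by
      rw [Finset.mul_sum, Finset.mul_sum, ← Finset.sum_add_distrib]
      refine Finset.sum_congr rfl fun i _ => ?_
      simp only [Pi.add_apply, Pi.smul_apply, smul_eq_mul]
      ring
    rw [smul_eq_mul, smul_eq_mul, he, hlin]
    exact add_le_add (mul_le_mul_of_nonneg_left hx' ha) (mul_le_mul_of_nonneg_left hy' hb)
  · set m := sInf (Set.range f) with hm
    have hfin : (Set.range f).Finite := Set.finite_range f
    have hne : (Set.range f).Nonempty := Set.range_nonempty f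
    have hmmem : m ∈ Set.range f := hne.csInf_mem hfin
    obtain ⟨S, hS⟩ := hmmem
    have hmlb : ∀ T : Finset (Fin n), m ≤ f T := fun T => csInf_le hfin.bddBelow ⟨T, rfl⟩
    have hlb : ∀ x ∈ Set.Icc (0 : Fin n → ℝ) 1, m ≤ lovasz f x := by
      intro x hx
      rw [lovasz_eq]
      have hm' : m = ∫ _ in Set.Ioc (0 : ℝ) 1, m := by
        rw [setIntegral_const]
        simp [Real.volume_Ioc]
      rw [hm']
      exact setIntegral_mono_on (integrableOn_const (by simp [Real.volume_Ioc]))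
        (lovasz_integrand_integrableOn f h0 x) measurableSet_Ioc (fun t _ => hmlb _)
    classical
    set xS : Fin n → ℝ := fun i => if i ∈ S then 1 else 0 with hxS
    have hxS_mem : xS ∈ Set.Icc (0 : Fin n → ℝ) 1 := by
      constructor <;> intro i <;> simp only [hxS, Pi.zero_apply, Pi.one_apply] <;>
        split <;> norm_num
    have hlovS : lovasz f xS = m := by
      rw [lovasz_eq]
      have heq : Set.EqOn (fun t => f (levelSet xS t)) (fun _ => f S) (Set.Ioc (0 : ℝ) 1) := by
        intro t ht
        have hls : levelSet xS t = S := by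
          ext i
          rw [mem_levelSet]
          by_cases hi : i ∈ S
          · simp [hxS, hi, ht.2]
          · simp [hxS, hi, not_le.mpr ht.1]
        simp [hls]
      rw [setIntegral_congr_fun measurableSet_Ioc heq, setIntegral_const]
      simp [Real.volume_Ioc, hS]
    refine le_antisymm (csInf_le ⟨m, ?_⟩ ⟨xS, hxS_mem, hlovS⟩) (le_csInf ⟨m, xS, hxS_mem, hlovS⟩ ?_)
    · rintro y ⟨x, hx, rfl⟩
      exact hlb x hx
    · rintro y ⟨x, hx, rfl⟩
      exact hlb x hx
end
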